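/- Let (M_α)_{α ∈ A} be a collection of persistence modules over a totally ordered set T such that the product ∏_α M_α is q-tame. Then the canonical inclusion ⊕_α M_α → ∏_α M_α is a weak isomorphism, i.e., its kernel and cokernel are ephemeral. -/

import Mathlib

open CategoryTheory CategoryTheory.Limits

set_option maxHeartbeats 1000000
set_option synthInstance.maxHeartbeats 200000

/-- A persistence module over a totally ordered set `T`: a functor from `T` (viewed as a
category via its order) to the category of `F`-vector spaces. -/
abbrev PersistenceModule (F : Type) [Field F] (T : Type) [LinearOrder T] :=
  T ⥤ ModuleCat.{0} F

variable (F : Type) [Field F] (T : Type) [LinearOrder T]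

/-- The inclusion functor of the strict up-set of `t` into `T`. -/
def upFunctor (t : T) : {s : T // t < s} ⥤ T :=
  Monotone.functor (f := (Subtype.val : {s : T // t < s} → T)) (fun _ _ h => h)

/-- The inclusion functor of the strict down-set of `t` into `T`. -/
def downFunctor (t : T) : {s : T // s < t} ⥤ T :=
  Monotone.functor (f := (Subtype.val : {s : T // s < t} → T)) (fun _ _ h => h)

/-- `underline M`, with `(underline M)_t = lim_{s > t} M_s` (the limit over the empty
category being `0`). -/
noncomputable def underlinePM (M : PersistenceModule F T) : PersistenceModule F T where
  obj t := limit (upFunctor T t ⋙ M)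
  map {s t} f := limit.lift (upFunctor T t ⋙ M)
    { pt := limit (upFunctor T s ⋙ M)
      π :=
        { app := fun u => limit.π (upFunctor T s ⋙ M) ⟨u.1, lt_of_le_of_lt (leOfHom f) u.2⟩
          naturality := fun u v g => by
            exact (Category.id_comp _).trans (limit.w (upFunctor T s ⋙ M) (homOfLE (leOfHom g))).symm } }
  map_id t := by
    apply limit.hom_ext
    intro u
    simp
  map_comp {s t u} f g := by
    apply limit.hom_ext
    intro v
    simp
    symm
    exact limit.lift_π _ _

/-- `overline M`, with `(overline M)_t = colim_{s < t} M_s` (the colimit over the empty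
category being `0`). -/
noncomputable def overlinePM (M : PersistenceModule F T) : PersistenceModule F T where
  obj t := colimit (downFunctor T t ⋙ M)
  map {s t} f := colimit.desc (downFunctor T s ⋙ M)
    { pt := colimit (downFunctor T t ⋙ M)
      ι :=
        { app := fun u => colimit.ι (downFunctor T t ⋙ M) ⟨u.1, lt_of_lt_of_le u.2 (leOfHom f)⟩
          naturality := fun u v g => by
            have h : (⟨u.1, lt_of_lt_of_le u.2 (leOfHom f)⟩ : {x : T // x < t}) ⟶
                ⟨v.1, lt_of_lt_of_le v.2 (leOfHom f)⟩ := homOfLE (leOfHom g)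
            exact (colimit.w (downFunctor T t ⋙ M) h).trans (Category.comp_id _).symm } }
  map_id t := by
    apply colimit.hom_ext
    intro u
    simp
  map_comp {s t u} f g := by
    apply colimit.hom_ext
    intro v
    simp
    symm
    exact colimit.ι_desc _ _

/-- The canonical morphism `M ⟶ underline M` given by the universal property of the limits. -/
noncomputable def toUnderline (M : PersistenceModule F T) : M ⟶ underlinePM F T M where
  app t := limit.lift (upFunctor T t ⋙ M)
    { pt := M.obj t
      π :=
        { app := fun u => M.map (homOfLE u.2.le)
          naturality := fun u v g => by
            dsimp
            rw [Category.id_comp, ← M.map_comp]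
            rfl } }
  naturality s t f := by
    apply limit.hom_ext
    intro u
    simp only [underlinePM, Category.assoc, limit.lift_π, ← M.map_comp]
    symm
    exact limit.lift_π _ _

/-- The canonical morphism `overline M ⟶ M` given by the universal property of the colimits. -/
noncomputable def fromOverline (M : PersistenceModule F T) : overlinePM F T M ⟶ M where
  app t := colimit.desc (downFunctor T t ⋙ M)
    { pt := M.obj t
      ι :=
        { app := fun u => M.map (homOfLE u.2.le)
          naturality := fun u v g => by
            dsimp
            rw [Category.comp_id, ← M.map_comp]
            rfl } }
  naturality s t f := by
    apply colimit.hom_ext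
    intro u
    simp only [overlinePM, colimit.ι_desc_assoc, colimit.ι_desc, ← M.map_comp]
    exact colimit.ι_desc _ _

/-- `M` is upper semi-continuous if the canonical map `M_t → lim_{s > t} M_s` is an
isomorphism for all `t`. -/
noncomputable def IsUSC (M : PersistenceModule F T) : Prop :=
  ∀ t : T, IsIso ((toUnderline F T M).app t)

/-- `M` is lower semi-continuous if the canonical map `colim_{s < t} M_s → M_t` is an
isomorphism for all `t`. -/
noncomputable def IsLSC (M : PersistenceModule F T) : Prop :=
  ∀ t : T, IsIso ((fromOverline F T M).app t)

/-- `M` is ephemeral if all structure maps `M_{s,t}` with `s < t` vanish. -/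
def Ephemeral (M : PersistenceModule F T) : Prop :=
  ∀ s t : T, ∀ h : s < t, M.map (homOfLE h.le) = 0

/-- `M` is q-tame if all structure maps `M_{s,t}` with `s < t` have finite rank. -/
def QTame (M : PersistenceModule F T) : Prop :=
  ∀ s t : T, ∀ h : s < t, Module.Finite F (LinearMap.range (M.map (homOfLE h.le)).hom)

/-- A morphism of persistence modules is a weak isomorphism if its kernel and cokernel
are ephemeral. -/
noncomputable def IsWeakIso {M N : PersistenceModule F T} (φ : M ⟶ N) : Prop :=
  Ephemeral F T (kernel φ) ∧ Ephemeral F T (cokernel φ)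

open Classical

/-- The interval module `C(I)`: the field `F` at points of `I` with identity structure
maps inside `I`, and `0` elsewhere (in particular `C(∅) = 0`). -/
noncomputable def intervalModule (I : Set T) : PersistenceModule F T where
  obj t := ModuleCat.of F (↥(if t ∈ I then (⊤ : Submodule F F) else (⊥ : Submodule F F)))
  map {s t} f :=
    if h : Set.Icc s t ⊆ I then
      ModuleCat.ofHom (Submodule.inclusion (by
        rw [if_pos (h (Set.right_mem_Icc.mpr (leOfHom f)))]
        exact le_top))
    else 0
  map_id t := by
    by_cases ht : t ∈ I
    · rw [dif_pos (by simpa using ht)]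
      rfl
    · have h : ¬ Set.Icc t t ⊆ I := by simpa using ht
      rw [dif_neg h]
      have hs : Subsingleton (↥(if t ∈ I then (⊤ : Submodule F F) else (⊥ : Submodule F F))) := by
        rw [if_neg ht]
        infer_instance
      apply ModuleCat.hom_ext
      apply LinearMap.ext
      intro x
      exact @Subsingleton.elim _ hs _ _
  map_comp {s t u} f g := by
    by_cases h : Set.Icc s u ⊆ I
    · have h1 : Set.Icc s t ⊆ I :=
        fun x hx => h ⟨hx.1, le_trans hx.2 (leOfHom g)⟩
      have h2 : Set.Icc t u ⊆ I :=
        fun x hx => h ⟨le_trans (leOfHom f) hx.1, hx.2⟩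
      rw [dif_pos h, dif_pos h1, dif_pos h2]
      rfl
    · rw [dif_neg h]
      by_cases h1 : Set.Icc s t ⊆ I
      · have h2 : ¬ Set.Icc t u ⊆ I := fun h2 => h (by
          intro x hx
          rcases le_total x t with hxt | htx
          · exact h1 ⟨hx.1, hxt⟩
          · exact h2 ⟨htx, hx.2⟩)
        rw [dif_pos h1, dif_neg h2, Limits.comp_zero]
      · rw [dif_neg h1, Limits.zero_comp]

/-- Functoriality of `overline` on morphisms. -/
noncomputable def overlineMap {M N : PersistenceModule F T} (φ : M ⟶ N) :
    overlinePM F T M ⟶ overlinePM F T N where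
  app t := colimMap (Functor.whiskerLeft (downFunctor T t) φ)
  naturality s t f := by
    apply colimit.hom_ext
    intro u
    simp [overlinePM]
    exact ι_colimMap _ _

/-- Functoriality of `underline` on morphisms. -/
noncomputable def underlineMap {M N : PersistenceModule F T} (φ : M ⟶ N) :
    underlinePM F T M ⟶ underlinePM F T N where
  app t := limMap (Functor.whiskerLeft (upFunctor T t) φ)
  naturality s t f := by
    apply limit.hom_ext
    intro u
    simp [underlinePM]
    symm
    exact limMap_π _ _

/-- The radical of a persistence module: the image of the canonical morphism
`overline M ⟶ M`. -/
noncomputable def radPM (M : PersistenceModule F T) : PersistenceModule F T :=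
  image (fromOverline F T M)

/-- The canonical morphism from the direct sum to the product of a collection of
persistence modules. -/
noncomputable def sumToProd {A : Type} (M : A → PersistenceModule F T) :
    (∐ M) ⟶ (∏ᶜ M) :=
  Sigma.desc fun a => Pi.lift fun b =>
    if h : a = b then eqToHom (congrArg M h) else 0

/-- The pointwise dual persistence module `M*`, indexed by the opposite order. -/
noncomputable def dualPM (M : PersistenceModule F T) : PersistenceModule F Tᵒᵈ where
  obj t := ModuleCat.of F (Module.Dual F (M.obj (OrderDual.ofDual t)))
  map {s t} f :=
    ModuleCat.ofHom (M.map (homOfLE (leOfHom f : OrderDual.ofDual t ≤ OrderDual.ofDual s))).hom.dualMap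
  map_id t := by
    rw [show (homOfLE _ : OrderDual.ofDual t ⟶ OrderDual.ofDual t) = 𝟙 _ from rfl,
      M.map_id]
    rfl
  map_comp {s t u} f g := by
    rw [show (homOfLE _ : OrderDual.ofDual u ⟶ OrderDual.ofDual s) =
        (homOfLE (leOfHom g : OrderDual.ofDual u ≤ OrderDual.ofDual t)) ≫
        (homOfLE (leOfHom f : OrderDual.ofDual t ≤ OrderDual.ofDual s)) from rfl,
      M.map_comp]
    rfl

/-- `I` is an interval in a totally ordered set: if `s ≤ t ≤ u` with `s, u ∈ I`, then `t ∈ I`. -/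
def IsInterval {T : Type*} [LinearOrder T] (I : Set T) : Prop :=
  ∀ ⦃s t u : T⦄, s ≤ t → t ≤ u → s ∈ I → u ∈ I → t ∈ I

/-- `underline I`: the set of `t` such that `I ∩ {s | t < s}` is nonempty and coinitial
in `{s | t < s}`. -/
def underlineSet {T : Type*} [LinearOrder T] (I : Set T) : Set T :=
  {t | (I ∩ Set.Ioi t).Nonempty ∧ ∀ s ∈ Set.Ioi t, ∃ u ∈ I ∩ Set.Ioi t, u ≤ s}

/-- `overline I`: the set of `t` such that `I ∩ {s | s < t}` is nonempty and cofinal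
in `{s | s < t}`. -/
def overlineSet {T : Type*} [LinearOrder T] (I : Set T) : Set T :=
  {t | (I ∩ Set.Iio t).Nonempty ∧ ∀ s ∈ Set.Iio t, ∃ u ∈ I ∩ Set.Iio t, s ≤ u}

/-- `rad I = I ∩ overline I`. -/
def radSet {T : Type*} [LinearOrder T] (I : Set T) : Set T :=
  I ∩ overlineSet I

/-! For each `t`, the map `(⨁ M) t → (∏ M) t` is the inclusion of finitely supported families
`⨁ₐ Mₐ(t) → ∏ₐ Mₐ(t)`; in particular it is injective, so its kernel vanishes. For `s < t` the
structure map of `∏ M` acts diagonally by the maps `Mₐ(s → t)`, so its range contains a linearly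
independent vector supported at each `a` with `Mₐ(s → t) ≠ 0`. Q-tameness therefore leaves only
finitely many such `a`: the image of `(∏ M) s` in `(∏ M) t` consists of finitely supported
families, which lie in the image of `⨁ M`, and the cokernel's structure maps vanish. -/

section PiMap

variable {K ι : Type*} [DivisionRing K] {V W : ι → Type*} [∀ i, AddCommGroup (V i)]
  [∀ i, Module K (V i)] [∀ i, AddCommGroup (W i)] [∀ i, Module K (W i)]

theorem Pi.linearIndepOn_single_of_ne_zero [DecidableEq ι] {y : ∀ i, W i} {s : Set ι}
    (hy : ∀ i ∈ s, y i ≠ 0) : LinearIndepOn K (fun i => Pi.single i (y i)) s := by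
  rw [LinearIndepOn, linearIndependent_iff']
  intro t g hg i hi
  have hgi := congr_fun hg i
  simp only [Finset.sum_apply, Pi.smul_apply, Pi.zero_apply] at hgi
  rw [Finset.sum_eq_single i (fun j _ hji => by
      rw [Pi.single_eq_of_ne (Subtype.coe_injective.ne hji.symm), smul_zero]) (absurd hi),
    Pi.single_eq_same] at hgi
  exact (smul_eq_zero.1 hgi).resolve_right (hy i i.2)

theorem LinearMap.finite_setOf_ne_zero_of_finite_range_piMap (f : ∀ i, V i →ₗ[K] W i)
    [Module.Finite K (LinearMap.range (LinearMap.piMap f))] : {i | f i ≠ 0}.Finite := by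
  have hx (i : ι) : ∃ x, f i ≠ 0 → f i x ≠ 0 := by
    by_contra! h
    exact (h 0).1 (LinearMap.ext fun x => (h x).2)
  choose x hx using hx
  let v (i : {i | f i ≠ 0}) : LinearMap.range (LinearMap.piMap f) :=
    ⟨Pi.single i.1 (f i (x i)), Pi.single i.1 (x i), by
      ext j; exact Pi.apply_single (fun j => f j) (fun j => map_zero _) _ _ j⟩
  have hv : LinearIndependent K v :=
    .of_comp (Submodule.subtype _) (Pi.linearIndepOn_single_of_ne_zero fun i hi => hx i hi)
  exact Set.finite_coe_iff.1 hv.finite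

end PiMap

section Evaluation

open DirectSum

variable {F : Type} [Field F] {T : Type} [LinearOrder T] {A : Type}
  (M : A → PersistenceModule F T)

noncomputable def piObjIsoPi (t : T) :
    (∏ᶜ M).obj t ≅ ModuleCat.of F (∀ a, (M a).obj t) :=
  piObjIso M t ≪≫ ModuleCat.piIsoPi _

lemma piObjIsoPi_hom_apply (t : T) (y : (∏ᶜ M).obj t) (a : A) :
    (piObjIsoPi M t).hom.hom y a = ((Pi.π M a).app t).hom y := by
  have h : (piObjIsoPi M t).hom ≫ ModuleCat.ofHom (LinearMap.proj a) = (Pi.π M a).app t := by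
    simp [piObjIsoPi, ModuleCat.piIsoPi_hom_ker_subtype]
  exact ConcreteCategory.congr_hom h y

noncomputable def directSumIsoSigmaObj (t : T) :
    ModuleCat.of F (⨁ a, (M a).obj t) ≅ (∐ M).obj t :=
  (sigmaObjIso M t ≪≫ ModuleCat.coprodIsoDirectSum _).symm

lemma directSumIsoSigmaObj_hom_lof (t : T) (a : A) (x : (M a).obj t) :
    (directSumIsoSigmaObj M t).hom.hom (lof F A (fun a => (M a).obj t) a x) =
      ((Sigma.ι M a).app t).hom x := by
  have h : ModuleCat.ofHom (lof F A (fun a => (M a).obj t) a) ≫ (directSumIsoSigmaObj M t).hom =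
      (Sigma.ι M a).app t := by
    rw [directSumIsoSigmaObj, Iso.symm_hom, Iso.trans_inv, ← Category.assoc,
      ModuleCat.lof_coprodIsoDirectSum_inv, ι_comp_sigmaObjIso_inv]
  exact ConcreteCategory.congr_hom h x

lemma ι_sumToProd_π (a b : A) :
    Sigma.ι M a ≫ sumToProd F T M ≫ Pi.π M b =
      if h : a = b then eqToHom (congrArg M h) else 0 := by
  simp [sumToProd]

lemma sumToProd_app_eq_coeFnLinearMap (t : T) :
    (directSumIsoSigmaObj M t).hom ≫ (sumToProd F T M).app t ≫ (piObjIsoPi M t).hom =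
      ModuleCat.ofHom (coeFnLinearMap F) := by
  ext1
  refine DirectSum.linearMap_ext _ fun a => LinearMap.ext fun x => funext fun b => ?_
  have h : ((Pi.π M b).app t).hom (((sumToProd F T M).app t).hom (((Sigma.ι M a).app t).hom x)) =
      ((if h : a = b then eqToHom (congrArg M h) else 0 : M a ⟶ M b).app t).hom x := by
    rw [← ι_sumToProd_π]
    rfl
  simp only [ModuleCat.hom_comp, ModuleCat.hom_ofHom, LinearMap.comp_apply, coeFnLinearMap_apply]
  rw [directSumIsoSigmaObj_hom_lof, piObjIsoPi_hom_apply, h]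
  split_ifs with hab
  · subst hab
    simp
  · rw [lof_eq_of, of_eq_of_ne _ _ _ (Ne.symm hab)]
    rfl

lemma piObjIsoPi_hom_sumToProd_app (t : T) (d : ⨁ a, (M a).obj t) :
    (piObjIsoPi M t).hom ((sumToProd F T M).app t ((directSumIsoSigmaObj M t).hom d)) = ⇑d :=
  ConcreteCategory.congr_hom (sumToProd_app_eq_coeFnLinearMap M t) d

lemma sumToProd_app_injective (t : T) : Function.Injective ((sumToProd F T M).app t) := by
  intro u v huv
  obtain ⟨d, rfl⟩ := (directSumIsoSigmaObj M t).toLinearEquiv.surjective u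
  obtain ⟨e, rfl⟩ := (directSumIsoSigmaObj M t).toLinearEquiv.surjective v
  have hde := congrArg (piObjIsoPi M t).hom huv
  rw [Iso.toLinearEquiv_apply, Iso.toLinearEquiv_apply, piObjIsoPi_hom_sumToProd_app,
    piObjIsoPi_hom_sumToProd_app] at hde
  rw [DFunLike.coe_injective hde]

lemma mem_range_sumToProd_app {t : T} (y : (∏ᶜ M).obj t)
    (hy : {a | (Pi.π M a).app t y ≠ 0}.Finite) :
    y ∈ LinearMap.range ((sumToProd F T M).app t).hom := by
  let d : ⨁ a, (M a).obj t := DFinsupp.mk hy.toFinset fun a => (Pi.π M a).app t y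
  refine ⟨(directSumIsoSigmaObj M t).hom d, (piObjIsoPi M t).toLinearEquiv.injective ?_⟩
  rw [Iso.toLinearEquiv_apply, Iso.toLinearEquiv_apply, piObjIsoPi_hom_sumToProd_app]
  funext a
  rw [piObjIsoPi_hom_apply]
  by_cases ha : (Pi.π M a).app t y = 0 <;> simp [d, DFinsupp.mk_apply, ha]

lemma piObjIsoPi_hom_naturality {s t : T} (f : s ⟶ t) :
    (∏ᶜ M).map f ≫ (piObjIsoPi M t).hom =
      (piObjIsoPi M s).hom ≫ ModuleCat.ofHom (LinearMap.piMap fun a => ((M a).map f).hom) := by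
  ext y a
  rw [ModuleCat.hom_comp, ModuleCat.hom_comp, LinearMap.comp_apply, LinearMap.comp_apply,
    piObjIsoPi_hom_apply, ModuleCat.hom_ofHom, LinearMap.coe_piMap, Pi.map_apply,
    piObjIsoPi_hom_apply]
  exact NatTrans.naturality_apply (Pi.π M a) f y

theorem QTame.finite_setOf_map_ne_zero (hq : QTame F T (∏ᶜ M)) {s t : T} (hst : s < t) :
    {a | (M a).map (homOfLE hst.le) ≠ 0}.Finite := by
  let f : s ⟶ t := homOfLE hst.le
  have := hq s t hst
  have hrange : LinearMap.range (LinearMap.piMap fun a => ((M a).map f).hom) =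
      (LinearMap.range ((∏ᶜ M).map f).hom).map (piObjIsoPi M t).hom.hom := by
    have hsurj : LinearMap.range (piObjIsoPi M s).hom.hom = ⊤ :=
      LinearMap.range_eq_top.2 (piObjIsoPi M s).toLinearEquiv.surjective
    rw [← LinearMap.range_comp, ← ModuleCat.hom_comp, piObjIsoPi_hom_naturality,
      ModuleCat.hom_comp, ModuleCat.hom_ofHom, LinearMap.range_comp_of_range_eq_top _ hsurj]
  have : Module.Finite F (LinearMap.range (LinearMap.piMap fun a => ((M a).map f).hom)) :=
    hrange ▸ inferInstance
  simpa only [ModuleCat.hom_injective.ne_iff' ModuleCat.hom_zero] using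
    LinearMap.finite_setOf_ne_zero_of_finite_range_piMap fun a => ((M a).map f).hom

end Evaluation

section Ephemeral

variable {F : Type} [Field F] {T : Type} [LinearOrder T]

lemma ephemeral_of_isZero {N : PersistenceModule F T} (hN : IsZero N) : Ephemeral F T N :=
  fun s _ _ => (hN.obj s).eq_of_src _ _

lemma ephemeral_cokernel_of_range_le {M N : PersistenceModule F T} (φ : M ⟶ N)
    (h : ∀ s t (hst : s < t),
      LinearMap.range (N.map (homOfLE hst.le)).hom ≤ LinearMap.range (φ.app t).hom) :
    Ephemeral F T (cokernel φ) := by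
  intro s t hst
  rw [← cancel_epi ((cokernel.π φ).app s), comp_zero, ← (cokernel.π φ).naturality]
  have hπ : φ.app t ≫ (cokernel.π φ).app t = 0 := by
    rw [← NatTrans.comp_app, cokernel.condition, NatTrans.app_zero]
  ext x
  obtain ⟨z, hz⟩ := h s t hst ⟨x, rfl⟩
  rw [ModuleCat.hom_comp, LinearMap.comp_apply, ← hz]
  exact ConcreteCategory.congr_hom hπ z

end Ephemeral

/-- If the product of a collection of persistence modules is q-tame, then the canonical
map from the direct sum to the product is a weak isomorphism. -/
theorem sumToProd_isWeakIso {A : Type} (M : A → PersistenceModule F T)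
    (hq : QTame F T (∏ᶜ M)) :
    IsWeakIso F T (sumToProd F T M) := by
  have (t : T) : Mono ((sumToProd F T M).app t) :=
    (ModuleCat.mono_iff_injective _).2 (sumToProd_app_injective M t)
  have := NatTrans.mono_of_mono_app (sumToProd F T M)
  refine ⟨ephemeral_of_isZero (isZero_kernel_of_mono _),
    ephemeral_cokernel_of_range_le _ fun s t hst => ?_⟩
  rintro _ ⟨y, rfl⟩
  refine mem_range_sumToProd_app M _ ((hq.finite_setOf_map_ne_zero M hst).subset fun a => mt ?_)
  intro ha
  rw [NatTrans.naturality_apply, ha]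
  rfl
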